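/- Let V be countably infinite, h and g be K-set maps with h_∅ = 0, and suppose h is nonzero on all one-element sets. If a and b are K-sequences with a ∘ h = g and b ∘ h = g, then a = b. -/
import Mathlib


open scoped Classical

noncomputable section

/-- The set of set partitions of a finite set `S`. -/
def partitions {V : Type*} [DecidableEq V] (S : Finset V) :
    Finset (Finset (Finset V)) :=
  S.powerset.powerset.filter
    (fun P => (∀ T ∈ P, T ≠ ∅) ∧ P.sup id = S ∧
      ∀ T ∈ P, ∀ U ∈ P, T ≠ U → Disjoint T U)

/-- Composition of a sequence with a set map:
`(a ∘ h)_S = ∑_{σ ⊢ S} a_{ℓ(σ)} ∏_{T ∈ σ} h_T`. -/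
def setComp {V R : Type*} [DecidableEq V] [CommRing R] (a : ℕ → R)
    (h : Finset V → R) : Finset V → R :=
  fun S => ∑ P ∈ partitions S, a P.card * ∏ T ∈ P, h T

section Aux

variable {V : Type*} [DecidableEq V]

lemma mem_partitions {S : Finset V} {P : Finset (Finset V)} :
    P ∈ partitions S ↔ (∀ T ∈ P, T ⊆ S) ∧ (∀ T ∈ P, T ≠ ∅) ∧ P.sup id = S ∧
      ∀ T ∈ P, ∀ U ∈ P, T ≠ U → Disjoint T U := by
  simp only [partitions, Finset.mem_filter, Finset.mem_powerset, Finset.subset_iff,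
    Finset.mem_powerset, and_assoc]

lemma sum_card_of_mem_partitions {S : Finset V} {P : Finset (Finset V)}
    (hP : P ∈ partitions S) : ∑ T ∈ P, T.card = S.card := by
  obtain ⟨hsub, hne, hsup, hdis⟩ := mem_partitions.mp hP
  rw [← hsup, Finset.sup_eq_biUnion]
  exact (Finset.card_biUnion hdis).symm

lemma card_le_of_mem_partitions {S : Finset V} {P : Finset (Finset V)}
    (hP : P ∈ partitions S) : P.card ≤ S.card := by
  obtain ⟨hsub, hne, hsup, hdis⟩ := mem_partitions.mp hP
  calc P.card = ∑ _T ∈ P, 1 := by simp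
    _ ≤ ∑ T ∈ P, T.card := Finset.sum_le_sum fun T hT =>
        Finset.card_pos.mpr (Finset.nonempty_iff_ne_empty.mpr (hne T hT))
    _ = S.card := sum_card_of_mem_partitions hP

lemma singletons_mem_partitions (S : Finset V) :
    S.image (fun v => ({v} : Finset V)) ∈ partitions S := by
  rw [mem_partitions]
  refine ⟨?_, ?_, ?_, ?_⟩
  · intro T hT
    obtain ⟨v, hv, rfl⟩ := Finset.mem_image.mp hT
    exact Finset.singleton_subset_iff.mpr hv
  · intro T hT
    obtain ⟨v, hv, rfl⟩ := Finset.mem_image.mp hT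
    exact Finset.singleton_ne_empty v
  · rw [Finset.sup_image]
    ext x
    simp [Finset.mem_sup]
  · intro T hT U hU hne
    obtain ⟨v, hv, rfl⟩ := Finset.mem_image.mp hT
    obtain ⟨u, hu, rfl⟩ := Finset.mem_image.mp hU
    simp only [Finset.disjoint_singleton_right, Finset.mem_singleton]
    intro hvu
    exact hne (by rw [hvu])

lemma eq_singletons_of_card_eq {S : Finset V} {P : Finset (Finset V)}
    (hP : P ∈ partitions S) (hcard : P.card = S.card) :
    P = S.image (fun v => ({v} : Finset V)) := by
  obtain ⟨hsub, hne, hsup, hdis⟩ := mem_partitions.mp hP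
  have hsum : ∑ T ∈ P, T.card = ∑ _T ∈ P, 1 := by
    rw [sum_card_of_mem_partitions hP, ← hcard]; simp
  have hone : ∀ T ∈ P, T.card = 1 := by
    intro T hT
    by_contra hc
    have h1 : ∀ U ∈ P, 1 ≤ U.card := fun U hU =>
      Finset.card_pos.mpr (Finset.nonempty_iff_ne_empty.mpr (hne U hU))
    have hlt : ∑ _T ∈ P, 1 < ∑ T ∈ P, T.card :=
      Finset.sum_lt_sum (fun U hU => h1 U hU)
        ⟨T, hT, lt_of_le_of_ne (h1 T hT) (Ne.symm hc)⟩
    omega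
  ext T
  simp only [Finset.mem_image]
  constructor
  · intro hT
    obtain ⟨v, rfl⟩ := Finset.card_eq_one.mp (hone T hT)
    exact ⟨v, hsub _ hT (Finset.mem_singleton_self v), rfl⟩
  · rintro ⟨v, hv, rfl⟩
    rw [← hsup, Finset.mem_sup] at hv
    obtain ⟨U, hU, hvU⟩ := hv
    obtain ⟨u, rfl⟩ := Finset.card_eq_one.mp (hone U hU)
    simp only [id_eq, Finset.mem_singleton] at hvU
    rwa [hvU]

end Aux

/-- On a countably infinite ground set, if `h_∅ = 0` and `h` is nonzero on
one-element sets, then a sequence `a` with `a ∘ h = g` is uniquely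
determined. -/
theorem setComp_seq_unique {V K : Type*} [DecidableEq V] [Countable V] [Infinite V]
    [Field K] [CharZero K]
    (h g : Finset V → K) (h0 : h ∅ = 0) (hone : ∀ v : V, h {v} ≠ 0)
    (a b : ℕ → K) (hag : setComp a h = g) (hbg : setComp b h = g) :
    a = b := by
  funext n
  induction n using Nat.strong_induction_on with
  | _ n ih =>
    set S : Finset V := (Finset.range n).map (Infinite.natEmbedding V) with hSdef
    have hScard : S.card = n := by simp [hSdef]
    have hgS : setComp a h S = setComp b h S := by rw [hag, hbg]
    unfold setComp at hgS
    set Ps := S.image (fun v => ({v} : Finset V)) with hPsdef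
    have hPsmem : Ps ∈ partitions S := singletons_mem_partitions S
    have hPscard : Ps.card = n := by
      rw [hPsdef, Finset.card_image_of_injective _ Finset.singleton_injective, hScard]
    have hsplit : ∀ (c : ℕ → K),
        ∑ P ∈ partitions S, c P.card * ∏ T ∈ P, h T
          = c n * ∏ v ∈ S, h {v}
            + ∑ P ∈ (partitions S).erase Ps, c P.card * ∏ T ∈ P, h T := by
      intro c
      rw [← Finset.add_sum_erase _ _ hPsmem]
      congr 1
      rw [hPscard]
      congr 1
      rw [hPsdef]
      exact Finset.prod_image (fun x _ y _ hxy => Finset.singleton_injective hxy)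
    rw [hsplit a, hsplit b] at hgS
    have hrest : ∑ P ∈ (partitions S).erase Ps, a P.card * ∏ T ∈ P, h T
        = ∑ P ∈ (partitions S).erase Ps, b P.card * ∏ T ∈ P, h T := by
      refine Finset.sum_congr rfl fun P hP => ?_
      have hPm := Finset.mem_of_mem_erase hP
      have hle : P.card ≤ n := hScard ▸ card_le_of_mem_partitions hPm
      have hlt : P.card < n := by
        rcases lt_or_eq_of_le hle with hlt | heq
        · exact hlt
        · exact absurd (eq_singletons_of_card_eq hPm (heq.trans hScard.symm))
            (Finset.ne_of_mem_erase hP)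
      rw [ih _ hlt]
    rw [hrest] at hgS
    have hprod : ∏ v ∈ S, h {v} ≠ 0 :=
      Finset.prod_ne_zero_iff.mpr fun v _ => hone v
    exact mul_right_cancel₀ hprod (add_right_cancel hgS)
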